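/- arXiv:0906.1541 — 2 statements merged into one kernel-verified Lean document; each statement's English description precedes it below -/
import Mathlib

section
/- Let d ≥ 1, R ≥ 1, and let φ : [1,∞) → (0,∞) be a decreasing function. Let A ⊂ ℝ^d be an affine subspace with 1 ≤ a = dim A ≤ d. For an integer T ≥ 1 let ζ_T^{(R)} denote the number of integer points z = (z_0,z_1,…,z_d) ∈ ℤ^{d+1} with z_0 = T, max_{1≤j≤d}|z_j| ≤ RT, and dist_∞(z,𝔄) ≤ φ(RT). Then there exists a constant C > 0, depending only on d, A, R and φ(1), such that ζ_T^{(R)} ≤ C·T^a for every integer T ≥ 1. -/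
/-- The lift `w ↦ (1, w)` from `ℝ^d` to `ℝ^{d+1}`. -/
noncomputable def lift1 {d : ℕ} (w : Fin d → ℝ) : Fin (d+1) → ℝ := Fin.cons 1 w

/-- The linear span of `{(1,w) : w ∈ A}` for an affine subspace `A ⊆ ℝ^d`. -/
noncomputable def spanLift {d : ℕ} (A : AffineSubspace ℝ (Fin d → ℝ)) :
    Submodule ℝ (Fin (d+1) → ℝ) :=
  Submodule.span ℝ (lift1 '' (A : Set (Fin d → ℝ)))

/-- The set of integer points counted by `ζ_T^{(R)}`. -/
noncomputable def ZSet {d : ℕ} (A : AffineSubspace ℝ (Fin d → ℝ))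
    (φ : ℝ → ℝ) (R : ℝ) (T : ℕ) : Set (Fin (d+1) → ℤ) :=
  {z | z 0 = (T : ℤ) ∧ (∀ j : Fin d, |((z j.succ : ℤ) : ℝ)| ≤ R * T) ∧
    Metric.infDist (fun i => (z i : ℝ)) (spanLift A : Set (Fin (d+1) → ℝ)) ≤ φ (R * T)}

/-!
After dropping `z₀ = T`, a counted point is an integer point of the cube `[-⌈RT⌉, ⌈RT⌉]^d`
within a fixed sup-distance `δ` of the affine subspace `T • p + direction A` (for some `p ∈ A`),
where `δ` depends only on `φ 1` and `p`, because `φ (RT) ≤ φ 1`. Choose `a = dim A` coordinates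
that are injective on `direction A`. Restricted to the finite-dimensional `direction A` this
projection is anti-Lipschitz, so two such points with the same `a` chosen coordinates are at
bounded distance. The count is therefore at most a constant times the `(2⌈RT⌉ + 1)^a` possible
values of the chosen coordinates.
-/

theorem Submodule.exists_disjoint_ker_funLeft {K n : Type*} [Field K] [Fintype n]
    (W : Submodule K (n → K)) :
    ∃ ι : Fin (Module.finrank K W) → n, Disjoint W (LinearMap.ker (LinearMap.funLeft K K ι)) := by
  let g : n → Module.Dual K W := fun i => (LinearMap.proj i).comp W.subtype
  have hspan : span K (Set.range g) = ⊤ :=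
    Submodule.span_eq_top_of_ne_zero fun v hv => by
      obtain ⟨i, hi⟩ := Function.ne_iff.mp (Subtype.coe_ne_coe.mpr hv)
      exact ⟨g i, Set.mem_range_self i, hi⟩
  obtain ⟨κ, a, -, hκspan, hκli⟩ := exists_linearIndependent' K g
  rw [hspan] at hκspan
  have := hκli.finite
  have hcard : Nat.card κ = Module.finrank K W := by
    have := Fintype.ofFinite κ
    rw [Nat.card_eq_fintype_card, ← finrank_span_eq_card hκli, hκspan, finrank_top,
      Subspace.dual_finrank_eq]
  let e := Finite.equivFinOfCardEq hcard
  refine ⟨a ∘ e.symm, Submodule.disjoint_def.mpr fun v hvW hv => ?_⟩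
  have hdual : ⊤ ≤ LinearMap.ker (Module.Dual.eval K W ⟨v, hvW⟩) := by
    rw [← hκspan, span_le]
    rintro _ ⟨k, rfl⟩
    simpa [g, e] using congrFun hv (e k)
  simpa using (Module.forall_dual_apply_eq_zero_iff K (⟨v, hvW⟩ : W)).mp fun φ => hdual trivial

theorem exists_norm_le_mul_norm_sub_of_disjoint_ker {𝕜 E F : Type*} [NontriviallyNormedField 𝕜]
    [CompleteSpace 𝕜] [NormedAddCommGroup E] [NormedSpace 𝕜 E] [NormedAddCommGroup F]
    [NormedSpace 𝕜 F] (P : E →L[𝕜] F) (W : Submodule 𝕜 E) [FiniteDimensional 𝕜 W]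
    (hW : Disjoint W (LinearMap.ker (P : E →ₗ[𝕜] F))) :
    ∃ K : ℝ, 0 ≤ K ∧ ∀ u ∈ LinearMap.ker (P : E →ₗ[𝕜] F), ∀ w ∈ W, ‖u‖ ≤ K * ‖u - w‖ := by
  have hinj : LinearMap.ker ((P : E →ₗ[𝕜] F) ∘ₗ W.subtype) = ⊥ := by
    rwa [LinearMap.ker_comp, ← Submodule.disjoint_iff_comap_eq_bot]
  obtain ⟨C, -, hC⟩ := LinearMap.exists_antilipschitzWith _ hinj
  refine ⟨1 + C * ‖P‖, by positivity, fun u hu w hw => ?_⟩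
  have hw_le : ‖w‖ ≤ C * ‖P‖ * ‖u - w‖ := calc
    ‖w‖ ≤ C * ‖P w‖ := by simpa using hC.le_mul_dist ⟨w, hw⟩ 0
    _ = C * ‖P (w - u)‖ := by rw [map_sub, show P u = 0 from hu, sub_zero]
    _ ≤ C * (‖P‖ * ‖w - u‖) := by gcongr; exact P.le_opNorm _
    _ = C * ‖P‖ * ‖u - w‖ := by rw [norm_sub_rev, mul_assoc]
  calc ‖u‖ ≤ ‖w‖ + ‖u - w‖ := norm_le_norm_add_norm_sub' u w
    _ ≤ (1 + C * ‖P‖) * ‖u - w‖ := by linarith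

theorem Int.card_piFinset_Icc_sub_add {n : Type*} [Fintype n] [DecidableEq n] (c : n → ℤ)
    (m : ℕ) :
    (Fintype.piFinset fun i => Finset.Icc (c i - m) (c i + m)).card =
      (2 * m + 1) ^ Fintype.card n := by
  have hcard : ∀ i, (c i + m + 1 - (c i - m)).toNat = 2 * m + 1 := fun i => by omega
  simp only [Fintype.card_piFinset, Int.card_Icc, hcard, Finset.prod_const, Finset.card_univ]

theorem Finset.card_le_of_abs_sub_le_of_comp_eq {n κ : Type*} [Fintype n] [Fintype κ]
    (s : Finset (n → ℤ)) (ι : κ → n) (N m : ℕ) (hbox : ∀ z ∈ s, ∀ k, |z (ι k)| ≤ N)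
    (hclose : ∀ z ∈ s, ∀ z' ∈ s, z ∘ ι = z' ∘ ι → ∀ j, |z j - z' j| ≤ m) :
    s.card ≤ (2 * m + 1) ^ Fintype.card n * (2 * N + 1) ^ Fintype.card κ := by
  classical
  have hfiber : ∀ b ∈ s.image (· ∘ ι), (s.filter fun z => z ∘ ι = b).card ≤
      (2 * m + 1) ^ Fintype.card n := by
    intro b hb
    obtain ⟨z₀, hz₀, rfl⟩ := Finset.mem_image.mp hb
    rw [← Int.card_piFinset_Icc_sub_add z₀ m]
    refine Finset.card_le_card fun z hz => ?_
    obtain ⟨hzs, hzι⟩ := Finset.mem_filter.mp hz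
    simp only [Fintype.mem_piFinset, Finset.mem_Icc]
    exact fun j => by have := abs_le.mp (hclose z hzs z₀ hz₀ hzι j); omega
  have himage : s.image (· ∘ ι) ⊆ Fintype.piFinset fun _ => Finset.Icc (0 - N : ℤ) (0 + N) := by
    intro b hb
    obtain ⟨z, hz, rfl⟩ := Finset.mem_image.mp hb
    simp only [Fintype.mem_piFinset, Finset.mem_Icc, Function.comp_apply]
    exact fun k => by have := abs_le.mp (hbox z hz k); omega
  calc s.card ≤ (2 * m + 1) ^ Fintype.card n * (s.image (· ∘ ι)).card :=
        Finset.card_le_mul_card_image s _ hfiber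
    _ ≤ (2 * m + 1) ^ Fintype.card n * (2 * N + 1) ^ Fintype.card κ := by
        rw [← Int.card_piFinset_Icc_sub_add (fun _ : κ => (0 : ℤ)) N]
        exact Nat.mul_le_mul_left _ (Finset.card_le_card himage)

section IntPointsNear

variable {n : Type*} [Fintype n]

open Classical in
noncomputable def intPointsNear (W : Submodule ℝ (n → ℝ)) (q : n → ℝ) (δ : ℝ) (N : ℕ) :
    Finset (n → ℤ) :=
  (Fintype.piFinset fun _ => Finset.Icc (-N : ℤ) N).filter
    fun z => ∃ w ∈ W, ‖(fun j => (z j : ℝ)) - q - w‖ ≤ δ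

theorem mem_intPointsNear {W : Submodule ℝ (n → ℝ)} {q : n → ℝ} {δ : ℝ} {N : ℕ} {z : n → ℤ} :
    z ∈ intPointsNear W q δ N ↔
      (∀ j, |z j| ≤ N) ∧ ∃ w ∈ W, ‖(fun j => (z j : ℝ)) - q - w‖ ≤ δ := by
  simp only [intPointsNear, Finset.mem_filter, Fintype.mem_piFinset, Finset.mem_Icc, abs_le]

theorem exists_card_intPointsNear_le (W : Submodule ℝ (n → ℝ)) (δ : ℝ) :
    ∃ C : ℕ, 0 < C ∧
      ∀ q N, (intPointsNear W q δ N).card ≤ C * (2 * N + 1) ^ Module.finrank ℝ W := by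
  obtain ⟨ι, hι⟩ := W.exists_disjoint_ker_funLeft
  obtain ⟨K, hK0, hK⟩ := exists_norm_le_mul_norm_sub_of_disjoint_ker
    (LinearMap.funLeft ℝ ℝ ι).toContinuousLinearMap W hι
  set m := ⌈K * (2 * δ)⌉₊
  refine ⟨(2 * m + 1) ^ Fintype.card n, by positivity, fun q N => ?_⟩
  have hbox : ∀ z ∈ intPointsNear W q δ N, ∀ k, |z (ι k)| ≤ N :=
    fun z hz k => (mem_intPointsNear.mp hz).1 (ι k)
  have hclose : ∀ z ∈ intPointsNear W q δ N, ∀ z' ∈ intPointsNear W q δ N, z ∘ ι = z' ∘ ι →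
      ∀ j, |z j - z' j| ≤ m := by
    intro z hz z' hz' hzz' j
    obtain ⟨-, w, hw, hzw⟩ := mem_intPointsNear.mp hz
    obtain ⟨-, w', hw', hzw'⟩ := mem_intPointsNear.mp hz'
    set u : n → ℝ := fun j => ((z j - z' j : ℤ) : ℝ)
    have hu : u ∈ LinearMap.ker (LinearMap.funLeft ℝ ℝ ι) := by
      ext k
      simp [u, show z (ι k) = z' (ι k) from congrFun hzz' k]
    have huw : ‖u - (w - w')‖ ≤ 2 * δ := by
      have hsplit : u - (w - w') =
          ((fun j => (z j : ℝ)) - q - w) - ((fun j => (z' j : ℝ)) - q - w') := by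
        ext
        simp [u]
        ring
      rw [hsplit]
      exact (norm_sub_le _ _).trans (by linarith)
    have : (|z j - z' j| : ℝ) ≤ m := calc
      (|z j - z' j| : ℝ) = ‖u j‖ := by simp [u]
      _ ≤ ‖u‖ := norm_le_pi_norm u j
      _ ≤ K * ‖u - (w - w')‖ := hK u hu _ (W.sub_mem hw hw')
      _ ≤ K * (2 * δ) := by gcongr
      _ ≤ m := Nat.le_ceil _
    exact_mod_cast this
  simpa using Finset.card_le_of_abs_sub_le_of_comp_eq _ ι N m hbox hclose

end IntPointsNear

theorem tail_sub_smul_mem_direction {d : ℕ} {A : AffineSubspace ℝ (Fin d → ℝ)}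
    {p : Fin d → ℝ} (hp : p ∈ A) {y : Fin (d + 1) → ℝ} (hy : y ∈ spanLift A) :
    Fin.tail y - y 0 • p ∈ A.direction := by
  let L : (Fin (d + 1) → ℝ) →ₗ[ℝ] Fin d → ℝ :=
    LinearMap.funLeft ℝ ℝ Fin.succ - (LinearMap.proj 0).smulRight p
  have hle : spanLift A ≤ A.direction.comap L := by
    refine Submodule.span_le.mpr ?_
    rintro _ ⟨w, hw, rfl⟩
    have hL : L (lift1 w) = w -ᵥ p := by
      ext j
      simp [L, lift1]
    simpa [hL] using A.vsub_mem_direction hw hp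
  exact hle hy

theorem mapsTo_tail_ZSet {d : ℕ} {A : AffineSubspace ℝ (Fin d → ℝ)} {p : Fin d → ℝ}
    (hp : p ∈ A) {φ : ℝ → ℝ} {R δ : ℝ} {T : ℕ} (hδ : φ (R * T) < δ) :
    Set.MapsTo Fin.tail (ZSet A φ R T)
      (intPointsNear A.direction ((T : ℝ) • p) (δ * (1 + ‖p‖)) ⌈R * T⌉₊) := by
  rintro z ⟨hz0, hzbox, hzdist⟩
  obtain ⟨y, hy, hzy⟩ := (Metric.infDist_lt_iff ⟨0, (spanLift A).zero_mem⟩).mp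
    (hzdist.trans_lt hδ)
  rw [dist_eq_norm] at hzy
  have hδ0 : 0 ≤ δ := (Metric.infDist_nonneg.trans hzdist).trans hδ.le
  refine mem_intPointsNear.mpr ⟨fun j => ?_, _, tail_sub_smul_mem_direction hp hy, ?_⟩
  · exact_mod_cast (hzbox j).trans (Nat.le_ceil _)
  · refine (pi_norm_le_iff_of_nonneg (by positivity)).mpr fun j => ?_
    have hT : |y 0 - T| ≤ ‖(fun i => (z i : ℝ)) - y‖ := by
      simpa [hz0, abs_sub_comm] using norm_le_pi_norm ((fun i => (z i : ℝ)) - y) 0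
    have hsucc : |(z j.succ : ℝ) - y j.succ| ≤ ‖(fun i => (z i : ℝ)) - y‖ := by
      simpa using norm_le_pi_norm ((fun i => (z i : ℝ)) - y) j.succ
    have hpj : |p j| ≤ ‖p‖ := by simpa using norm_le_pi_norm p j
    calc ‖((fun j => (Fin.tail z j : ℝ)) - (T : ℝ) • p - (Fin.tail y - y 0 • p)) j‖
        = |((z j.succ : ℝ) - y j.succ) + (y 0 - T) * p j| := by
          simp only [Pi.sub_apply, Pi.smul_apply, Fin.tail, smul_eq_mul, Real.norm_eq_abs]
          ring_nf
      _ ≤ |(z j.succ : ℝ) - y j.succ| + |y 0 - T| * |p j| := by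
          rw [← abs_mul]; exact abs_add_le _ _
      _ ≤ δ * (1 + ‖p‖) := by nlinarith [abs_nonneg (y 0 - T), abs_nonneg (p j)]

theorem injOn_tail_ZSet {d : ℕ} (A : AffineSubspace ℝ (Fin d → ℝ)) (φ : ℝ → ℝ) (R : ℝ) (T : ℕ) :
    Set.InjOn Fin.tail (ZSet A φ R T) := by
  intro z hz z' hz' hzz'
  rw [← Fin.cons_self_tail z, ← Fin.cons_self_tail z', hz.1, hz'.1, hzz']

theorem zeta_upper_bound_general
    (d a : ℕ) (R : ℝ) (hR : 1 ≤ R)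
    (φ : ℝ → ℝ)
    (hφanti : ∀ T₁ T₂, 1 ≤ T₁ → T₁ ≤ T₂ → φ T₂ ≤ φ T₁)
    (A : AffineSubspace ℝ (Fin d → ℝ))
    (ha : Module.finrank ℝ A.direction = a)
    (ha1 : 1 ≤ a) :
    ∃ C > (0:ℝ), ∀ T : ℕ, 1 ≤ T →
      (ZSet A φ R T).Finite ∧
      (Nat.card (ZSet A φ R T) : ℝ) ≤ C * (T : ℝ) ^ a := by
  obtain ⟨p, hp⟩ : (A : Set (Fin d → ℝ)).Nonempty := by
    rw [AffineSubspace.nonempty_iff_ne_bot]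
    rintro rfl
    rw [AffineSubspace.direction_bot, finrank_bot] at ha
    omega
  obtain ⟨C, hC0, hC⟩ := exists_card_intPointsNear_le A.direction ((φ 1 + 1) * (1 + ‖p‖))
  refine ⟨C * (5 * R) ^ a, by positivity, fun T hT => ?_⟩
  have hRT : 1 ≤ R * T := one_le_mul_of_one_le_of_one_le hR (by exact_mod_cast hT)
  have hmaps := mapsTo_tail_ZSet hp ((hφanti 1 _ le_rfl hRT).trans_lt (lt_add_one (φ 1)))
  have hinj := injOn_tail_ZSet A φ R T
  refine ⟨Set.Finite.of_injOn hmaps hinj (Finset.finite_toSet _), ?_⟩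
  have hceil : (2 * ⌈R * T⌉₊ + 1 : ℝ) ≤ 5 * R * T := by
    linarith [Nat.ceil_lt_add_one (zero_le_one.trans hRT)]
  calc (Nat.card (ZSet A φ R T) : ℝ)
      ≤ (intPointsNear A.direction ((T : ℝ) • p) ((φ 1 + 1) * (1 + ‖p‖)) ⌈R * T⌉₊).card := by
        rw [Nat.card_coe_set_eq, ← Set.ncard_coe_finset]
        exact_mod_cast Set.ncard_le_ncard_of_injOn _ hmaps hinj (Finset.finite_toSet _)
    _ ≤ C * (2 * ⌈R * T⌉₊ + 1) ^ a := by rw [← ha]; exact_mod_cast hC _ _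
    _ ≤ C * (5 * R * T) ^ a := by gcongr
    _ = C * (5 * R) ^ a * (T : ℝ) ^ a := by ring

theorem zeta_upper_bound
    (d a : ℕ) (hd : 1 ≤ d) (R : ℝ) (hR : 1 ≤ R)
    (φ : ℝ → ℝ)
    (hφpos : ∀ T, 1 ≤ T → 0 < φ T)
    (hφanti : ∀ T₁ T₂, 1 ≤ T₁ → T₁ ≤ T₂ → φ T₂ ≤ φ T₁)
    (A : AffineSubspace ℝ (Fin d → ℝ))
    (ha : Module.finrank ℝ A.direction = a)
    (ha1 : 1 ≤ a) (had : a ≤ d) :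
    ∃ C > (0:ℝ), ∀ T : ℕ, 1 ≤ T →
      (ZSet A φ R T).Finite ∧
      (Nat.card (ZSet A φ R T) : ℝ) ≤ C * (T : ℝ) ^ a :=
  zeta_upper_bound_general d a R hR φ hφanti A ha ha1
end

section
/- Let d ≥ 1, R ≥ 1, and let φ : [1,∞) → (0,∞) be a decreasing function with φ(1) ≤ 1. Let A ⊂ ℝ^d be an affine subspace with 1 ≤ a = dim A ≤ d. For an integer T ≥ 1 let ζ_T^{(R)} denote the number of integer points z = (z_0,…,z_d) ∈ ℤ^{d+1} with z_0 = T, max_{1≤j≤d}|z_j| ≤ RT, and dist_∞(z,𝔄) ≤ φ(RT), and let 𝒰_T = {w ∈ A : max_{1≤j≤d}|w_j| ≤ R and there exists such an integer point z with inf_{t∈ℝ} |z − t·(1,w)|_∞ ≤ φ(RT)}. Then there exists a constant C > 0, depending only on d, A and R, such that the a-dimensional Hausdorff measure of 𝒰_T satisfies ℋ^a(𝒰_T) ≤ C·ζ_T^{(R)}·(φ(RT)/T)^a for every integer T ≥ 1. -/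
/-!
If `w ∈ 𝒰_T` is witnessed by `z`, then comparing `z` with `t • (1, w)` in the coordinates `0` and
`j` gives `|z_j - T w_j| ≤ (1 + R) φ(RT)`. Hence `𝒰_T` is covered by the `ζ_T^{(R)}` sets
`A ∩ B(z/T, (1 + R) φ(RT) / T)`, and a bi-Lipschitz parametrisation of `A` by `ℝ^a` bounds the
`ℋ^a`-measure of each of them by a constant times the `a`-th power of the radius.
-/

open MeasureTheory

/-- The set `𝒰_T ⊆ A` of points close to a rational point counted by `ζ_T^{(R)}`. -/
noncomputable def USet {d : ℕ} (A : AffineSubspace ℝ (Fin d → ℝ))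
    (φ : ℝ → ℝ) (R : ℝ) (T : ℕ) : Set (Fin d → ℝ) :=
  {w | w ∈ A ∧ (∀ j : Fin d, |w j| ≤ R) ∧
    ∃ z ∈ ZSet A φ R T,
      (⨅ t : ℝ, ‖(fun i => (z i : ℝ)) - t • lift1 w‖) ≤ φ (R * T)}

open scoped ENNReal NNReal

theorem LipschitzWith.hausdorffMeasure_image_closedBall_le {ι X : Type*} [Fintype ι]
    [EMetricSpace X] [MeasurableSpace X] [BorelSpace X] {L : ℝ≥0} {f : (ι → ℝ) → X}
    (hf : LipschitzWith L f) (x : ι → ℝ) {ρ : ℝ} (hρ : 0 ≤ ρ) :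
    μH[(Fintype.card ι : ℝ)] (f '' Metric.closedBall x ρ)
      ≤ ENNReal.ofReal ((L * (2 * ρ)) ^ Fintype.card ι) := by
  calc μH[(Fintype.card ι : ℝ)] (f '' Metric.closedBall x ρ)
      ≤ (L : ℝ≥0∞) ^ (Fintype.card ι : ℝ) * μH[(Fintype.card ι : ℝ)] (Metric.closedBall x ρ) :=
        hf.hausdorffMeasure_image_le (by positivity) _
    _ = ENNReal.ofReal ((L * (2 * ρ)) ^ Fintype.card ι) := by
        rw [hausdorffMeasure_pi_real, Real.volume_pi_closedBall _ hρ, ENNReal.rpow_natCast,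
          mul_pow (L : ℝ), ENNReal.ofReal_mul (by positivity), ENNReal.ofReal_pow L.coe_nonneg]
        simp

theorem AntilipschitzWith.range_inter_closedBall_subset {α β : Type*} [PseudoMetricSpace α]
    [PseudoMetricSpace β] {K : ℝ≥0} {f : α → β} (hf : AntilipschitzWith K f) {x : α} {c : β}
    {r : ℝ} (hx : f x ∈ Metric.closedBall c r) :
    Set.range f ∩ Metric.closedBall c r ⊆ f '' Metric.closedBall x (K * (2 * r)) := by
  rintro _ ⟨⟨y, rfl⟩, hy⟩
  refine ⟨y, ?_, rfl⟩
  calc dist y x ≤ K * dist (f y) (f x) := hf.le_mul_dist y x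
    _ ≤ K * (2 * r) := by
        gcongr
        linarith [dist_triangle_right (f y) (f x) c, Metric.mem_closedBall.mp hx,
          Metric.mem_closedBall.mp hy]

section AffineSubspace

variable {E : Type*} [NormedAddCommGroup E] [NormedSpace ℝ E] [FiniteDimensional ℝ E]

theorem AffineSubspace.exists_lipschitz_antilipschitz_param {a : ℕ}
    (A : AffineSubspace ℝ E) (ha : Module.finrank ℝ A.direction = a) {p : E} (hp : p ∈ A) :
    ∃ (f : (Fin a → ℝ) → E) (K L : ℝ≥0),
      LipschitzWith L f ∧ AntilipschitzWith K f ∧ Set.range f = A := by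
  let e : (Fin a → ℝ) ≃L[ℝ] A.direction := ContinuousLinearEquiv.ofFinrankEq (by simp [ha])
  have hdist : ∀ x y, dist ((e x : E) + p) ((e y : E) + p) = dist (e x) (e y) := fun x y => by
    rw [dist_add_right]; rfl
  refine ⟨fun x => (e x : E) + p, ‖(e.symm : A.direction →L[ℝ] (Fin a → ℝ))‖₊,
    ‖(e : (Fin a → ℝ) →L[ℝ] A.direction)‖₊, ?_, ?_, ?_⟩
  · exact LipschitzWith.of_dist_le_mul fun x y =>
      (hdist x y).trans_le (e.lipschitz.dist_le_mul x y)
  · exact AntilipschitzWith.of_le_mul_dist fun x y =>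
      (e.antilipschitz.le_mul_dist x y).trans_eq (by rw [hdist])
  · ext w
    constructor
    · rintro ⟨x, rfl⟩
      exact (AffineSubspace.vsub_right_mem_direction_iff_mem hp _).mp (by simp)
    · intro hw
      refine ⟨e.symm ⟨w - p, (AffineSubspace.vsub_right_mem_direction_iff_mem hp w).mpr hw⟩, ?_⟩
      simp

theorem AffineSubspace.exists_hausdorffMeasure_inter_closedBall_le [MeasurableSpace E]
    [BorelSpace E] {a : ℕ} (A : AffineSubspace ℝ E) (ha : Module.finrank ℝ A.direction = a) :
    ∃ C > (0 : ℝ), ∀ (c : E) (r : ℝ),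
      μH[(a : ℝ)] ((A : Set E) ∩ Metric.closedBall c r) ≤ ENNReal.ofReal (C * r ^ a) := by
  rcases (A : Set E).eq_empty_or_nonempty with hA | ⟨p, hp⟩
  · exact ⟨1, one_pos, fun c r => by simp [hA]⟩
  obtain ⟨f, K, L, hfL, hfK, hrange⟩ := A.exists_lipschitz_antilipschitz_param ha hp
  -- the `+ 1` keeps the constant positive when `K * L = 0`
  refine ⟨(4 * K * L) ^ a + 1, by positivity, fun c r => ?_⟩
  rw [← hrange]
  rcases (Set.range f ∩ Metric.closedBall c r).eq_empty_or_nonempty with h | ⟨_, ⟨x, rfl⟩, hx⟩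
  · simp [h]
  have hr : 0 ≤ r := Metric.nonempty_closedBall.mp ⟨_, hx⟩
  calc μH[(a : ℝ)] (Set.range f ∩ Metric.closedBall c r)
      ≤ μH[(a : ℝ)] (f '' Metric.closedBall x (K * (2 * r))) :=
        measure_mono (hfK.range_inter_closedBall_subset hx)
    _ ≤ ENNReal.ofReal ((L * (2 * (K * (2 * r)))) ^ a) := by
        simpa using hfL.hausdorffMeasure_image_closedBall_le x (by positivity)
    _ ≤ ENNReal.ofReal (((4 * K * L) ^ a + 1) * r ^ a) := by
        gcongr ENNReal.ofReal ?_
        rw [add_mul, one_mul, ← mul_pow]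
        exact le_add_of_le_of_nonneg (le_of_eq (by ring)) (by positivity)

end AffineSubspace

theorem Set.Finite.measure_biUnion_le_card_mul {α ι : Type*} [MeasurableSpace α]
    {μ : Measure α} {s : Set ι} (hs : s.Finite) (f : ι → Set α) {c : ℝ≥0∞}
    (h : ∀ i ∈ s, μ (f i) ≤ c) : μ (⋃ i ∈ s, f i) ≤ Nat.card s * c := by
  rw [Nat.card_eq_card_finite_toFinset hs, ← nsmul_eq_mul]
  conv_lhs => rw [← hs.coe_toFinset]
  exact (measure_biUnion_finset_le _ _).trans
    (Finset.sum_le_card_nsmul _ _ _ fun i hi => h i (hs.mem_toFinset.mp hi))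

theorem abs_sub_mul_le_norm_sub_smul_lift1 {d : ℕ} (z : Fin (d+1) → ℝ) (w : Fin d → ℝ)
    (t : ℝ) (j : Fin d) :
    |z j.succ - z 0 * w j| ≤ (1 + |w j|) * ‖z - t • lift1 w‖ := by
  set v := z - t • lift1 w
  have hv0 : v 0 = z 0 - t := by simp [v, lift1]
  have hvj : v j.succ = z j.succ - t * w j := by simp [v, lift1]
  have hv0le : |v 0| ≤ ‖v‖ := (Real.norm_eq_abs _).symm.trans_le (norm_le_pi_norm v 0)
  have hvjle : |v j.succ| ≤ ‖v‖ := (Real.norm_eq_abs _).symm.trans_le (norm_le_pi_norm v j.succ)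
  calc |z j.succ - z 0 * w j| = |v j.succ - v 0 * w j| := by rw [hv0, hvj]; ring_nf
    _ ≤ |v j.succ| + |v 0| * |w j| := by rw [← abs_mul]; exact abs_sub _ _
    _ ≤ ‖v‖ + ‖v‖ * |w j| := by gcongr
    _ = (1 + |w j|) * ‖v‖ := by ring

theorem dist_le_of_iInf_norm_sub_smul_lift1_le {d : ℕ} {z : Fin (d+1) → ℝ} {w : Fin d → ℝ}
    {R ε : ℝ} (hR : 0 ≤ R) (hw : ∀ j, |w j| ≤ R) (hz : 0 < z 0)
    (h : ⨅ t : ℝ, ‖z - t • lift1 w‖ ≤ ε) :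
    dist w (fun j => z j.succ / z 0) ≤ (1 + R) * ε / z 0 := by
  have hε : 0 ≤ ε := (Real.iInf_nonneg fun _ => norm_nonneg _).trans h
  refine (dist_pi_le_iff (by positivity)).mpr fun j => ?_
  have hcoord : |z j.succ - z 0 * w j| ≤ (1 + R) * ε :=
    calc |z j.succ - z 0 * w j| ≤ ⨅ t : ℝ, (1 + R) * ‖z - t • lift1 w‖ :=
          le_ciInf fun t =>
            (abs_sub_mul_le_norm_sub_smul_lift1 z w t j).trans (by gcongr; exact hw j)
      _ = (1 + R) * ⨅ t : ℝ, ‖z - t • lift1 w‖ := (Real.mul_iInf_of_nonneg (by positivity) _).symm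
      _ ≤ (1 + R) * ε := by gcongr
  rw [Real.dist_eq, le_div_iff₀ hz, ← abs_of_pos hz, ← abs_mul, abs_of_pos hz]
  calc |(w j - z j.succ / z 0) * z 0| = |z j.succ - z 0 * w j| := by
        rw [← abs_neg]; congr 1; field_simp; ring
    _ ≤ (1 + R) * ε := hcoord

theorem finite_ZSet {d : ℕ} (A : AffineSubspace ℝ (Fin d → ℝ)) (φ : ℝ → ℝ) (R : ℝ) (T : ℕ) :
    (ZSet A φ R T).Finite := by
  refine (ProperSpace.isCompact_closedBall (0 : Fin (d+1) → ℤ) (max T (R * T))).finite_of_discrete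
    |>.subset fun z ⟨hz0, hzj, _⟩ => ?_
  rw [mem_closedBall_zero_iff, pi_norm_le_iff_of_nonneg (by positivity)]
  refine Fin.cases ?_ (fun j => ?_)
  · simp [hz0]
  · exact (Int.norm_eq_abs _).trans_le ((hzj j).trans (le_max_right _ _))

theorem USet_subset_biUnion {d : ℕ} (A : AffineSubspace ℝ (Fin d → ℝ)) (φ : ℝ → ℝ) {R : ℝ}
    (hR : 0 ≤ R) {T : ℕ} (hT : 0 < T) :
    USet A φ R T ⊆ ⋃ z ∈ ZSet A φ R T,
      (A : Set (Fin d → ℝ)) ∩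
        Metric.closedBall (fun j => (z j.succ : ℝ) / T) ((1 + R) * φ (R * T) / T) := by
  rintro w ⟨hwA, hwR, z, hz, hinf⟩
  have hz0 : ((z 0 : ℤ) : ℝ) = T := by rw [hz.1]; rfl
  refine Set.mem_biUnion hz ⟨hwA, ?_⟩
  have := dist_le_of_iInf_norm_sub_smul_lift1_le hR hwR (by rw [hz0]; exact_mod_cast hT) hinf
  rwa [hz0] at this

theorem measure_of_USet_bound_general
    (d a : ℕ) (R : ℝ) (hR : 1 ≤ R)
    (φ : ℝ → ℝ)
    (A : AffineSubspace ℝ (Fin d → ℝ))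
    (ha : Module.finrank ℝ A.direction = a) :
    ∃ C > (0:ℝ), ∀ T : ℕ, 1 ≤ T →
      (μH[(a : ℝ)] : Measure (Fin d → ℝ)) (USet A φ R T)
        ≤ ENNReal.ofReal (C * (Nat.card (ZSet A φ R T)) * (φ (R * T) / T) ^ a) := by
  obtain ⟨C, hC, hball⟩ := A.exists_hausdorffMeasure_inter_closedBall_le ha
  have hR0 : 0 ≤ R := by linarith
  refine ⟨C * (1 + R) ^ a, by positivity, fun T hT => ?_⟩
  calc μH[(a : ℝ)] (USet A φ R T)
      ≤ μH[(a : ℝ)] (⋃ z ∈ ZSet A φ R T, (A : Set (Fin d → ℝ)) ∩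
          Metric.closedBall (fun j => (z j.succ : ℝ) / T) ((1 + R) * φ (R * T) / T)) :=
        measure_mono (USet_subset_biUnion A φ hR0 hT)
    _ ≤ Nat.card (ZSet A φ R T) * ENNReal.ofReal (C * ((1 + R) * φ (R * T) / T) ^ a) :=
        (finite_ZSet A φ R T).measure_biUnion_le_card_mul _ fun z _ => hball _ _
    _ = ENNReal.ofReal (C * (1 + R) ^ a * (Nat.card (ZSet A φ R T)) * (φ (R * T) / T) ^ a) := by
        rw [← ENNReal.ofReal_natCast, ← ENNReal.ofReal_mul (by positivity), mul_div_assoc, mul_pow]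
        congr 1
        ring

theorem measure_of_USet_bound
    (d a : ℕ) (hd : 1 ≤ d) (R : ℝ) (hR : 1 ≤ R)
    (φ : ℝ → ℝ)
    (hφpos : ∀ T, 1 ≤ T → 0 < φ T)
    (hφanti : ∀ T₁ T₂, 1 ≤ T₁ → T₁ ≤ T₂ → φ T₂ ≤ φ T₁)
    (hφ1 : φ 1 ≤ 1)
    (A : AffineSubspace ℝ (Fin d → ℝ))
    (ha : Module.finrank ℝ A.direction = a)
    (ha1 : 1 ≤ a) (had : a ≤ d) :
    ∃ C > (0:ℝ), ∀ T : ℕ, 1 ≤ T →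
      (μH[(a : ℝ)] : Measure (Fin d → ℝ)) (USet A φ R T)
        ≤ ENNReal.ofReal (C * (Nat.card (ZSet A φ R T)) * (φ (R * T) / T) ^ a) :=
  measure_of_USet_bound_general d a R hR φ A ha
end
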